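/- arXiv:2002.07084 — 7 statements merged into one kernel-verified Lean document; each statement's English description precedes it below -/
import Mathlib

section
/- For any point P in the complex plane not lying on the unit circle, the three distances |P - A₀|, |P - B₀|, |P - C₀| satisfy all three strict triangle inequalities, i.e., there exists a (non-degenerate) triangle with these side lengths. -/
open Complex

noncomputable def A0 : ℂ := Complex.I
noncomputable def B0 : ℂ := -Complex.exp ((Real.pi : ℂ) * Complex.I / 6)
noncomputable def C0 : ℂ := Complex.exp (-((Real.pi : ℂ) * Complex.I) / 6)

lemma genid (a b c P q : ℂ) (ha : a ≠ 0) (hb : b ≠ 0) (hc : c ≠ 0) :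
    a * b * c * ((P - b) * (c - a) * ((q - c⁻¹) * (a⁻¹ - b⁻¹))
      - ((q - b⁻¹) * (c⁻¹ - a⁻¹)) * ((P - c) * (a - b)))
    = (a - b) * (b - c) * (c - a) * (P * q - 1) := by
  field_simp
  ring

lemma sameRay_im_eq (u v : ℂ) (h : SameRay ℝ u v) :
    (u * (starRingEnd ℂ) v).im = 0 := by
  obtain h | h | ⟨r1, r2, hr1, hr2, h3⟩ := h
  · simp [h]
  · simp [h]
  · have h3' : (r1 : ℂ) * u = (r2 : ℂ) * v := by
      simpa [Complex.real_smul] using h3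
    have key : (r1 : ℂ) * (u * (starRingEnd ℂ) v) = (r2 : ℂ) * (Complex.normSq v : ℝ) := by
      rw [← mul_assoc, h3', mul_assoc, Complex.mul_conj]
    have him : r1 * (u * (starRingEnd ℂ) v).im = 0 := by
      have := congrArg Complex.im key
      simpa using this
    exact (mul_eq_zero.mp him).resolve_left hr1.ne' 

lemma pomp (P a b c : ℂ)
    (ha1 : ‖a‖ = 1) (hb1 : ‖b‖ = 1) (hc1 : ‖c‖ = 1)
    (hbc : ‖b - c‖ = Real.sqrt 3)
    (hca : ‖c - a‖ = Real.sqrt 3)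
    (hab : ‖a - b‖ = Real.sqrt 3)
    (hP : ‖P‖ ≠ 1) :
    ‖P - a‖ < ‖P - b‖ + ‖P - c‖ := by
  have hs : (0:ℝ) < Real.sqrt 3 := Real.sqrt_pos.mpr (by norm_num)
  set u := (P - b) * (c - a) with hu
  set v := (P - c) * (a - b) with hv
  have ha0 : a ≠ 0 := fun h => by simp [h] at ha1
  have hb0 : b ≠ 0 := fun h => by simp [h] at hb1
  have hc0 : c ≠ 0 := fun h => by simp [h] at hc1
  have hab' : a - b ≠ 0 := fun h => by rw [h] at hab; simp at hab; linarith [hab ▸ hs]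
  have hbc' : b - c ≠ 0 := fun h => by rw [h] at hbc; simp at hbc; linarith [hbc ▸ hs]
  have hca' : c - a ≠ 0 := fun h => by rw [h] at hca; simp at hca; linarith [hca ▸ hs]
  -- the cross-ratio identity
  have hainv : a⁻¹ = (starRingEnd ℂ) a := Complex.inv_eq_conj ha1
  have hbinv : b⁻¹ = (starRingEnd ℂ) b := Complex.inv_eq_conj hb1
  have hcinv : c⁻¹ = (starRingEnd ℂ) c := Complex.inv_eq_conj hc1
  have gid := genid a b c P ((starRingEnd ℂ) P) ha0 hb0 hc0
  rw [hainv, hbinv, hcinv] at gid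
  have hconj : (starRingEnd ℂ) (u * (starRingEnd ℂ) v) = ((starRingEnd ℂ) u) * v := by
    rw [map_mul, Complex.conj_conj, mul_comm]
  have hexp : u * (starRingEnd ℂ) v - (starRingEnd ℂ) (u * (starRingEnd ℂ) v)
      = (P - b) * (c - a) * (((starRingEnd ℂ) P - (starRingEnd ℂ) c) * ((starRingEnd ℂ) a - (starRingEnd ℂ) b))
        - (((starRingEnd ℂ) P - (starRingEnd ℂ) b) * ((starRingEnd ℂ) c - (starRingEnd ℂ) a)) * ((P - c) * (a - b)) := by
    rw [hconj, hu, hv]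
    simp only [map_mul, map_sub]
    try ring
  have hnorm : P * (starRingEnd ℂ) P - 1 ≠ 0 := by
    rw [Complex.mul_conj, sub_ne_zero]
    intro h
    apply hP
    have h2 : Complex.normSq P = 1 := by exact_mod_cast h
    rw [Complex.norm_def, h2, Real.sqrt_one]
  have him : (u * (starRingEnd ℂ) v).im ≠ 0 := by
    intro h0
    have hz : u * (starRingEnd ℂ) v - (starRingEnd ℂ) (u * (starRingEnd ℂ) v) = 0 := by
      have := Complex.sub_conj (u * (starRingEnd ℂ) v)
      rw [this, h0]
      simp
    rw [hexp] at hz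
    have : a * b * c * ((P - b) * (c - a) * (((starRingEnd ℂ) P - (starRingEnd ℂ) c) * ((starRingEnd ℂ) a - (starRingEnd ℂ) b))
        - (((starRingEnd ℂ) P - (starRingEnd ℂ) b) * ((starRingEnd ℂ) c - (starRingEnd ℂ) a)) * ((P - c) * (a - b))) = 0 := by
      rw [hz, mul_zero]
    rw [gid] at this
    exact (mul_ne_zero (mul_ne_zero (mul_ne_zero hab' hbc') hca') hnorm) this
  have hray : ¬ SameRay ℝ u v := fun h => him (sameRay_im_eq u v h)
  have hne : ‖u + v‖ ≠ ‖u‖ + ‖v‖ := by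
    intro h
    exact hray (sameRay_iff_norm_add.mpr (by simpa using h))
  have hlt : ‖u + v‖ < ‖u‖ + ‖v‖ :=
    lt_of_le_of_ne (norm_add_le u v) hne
  have hsum : u + v = -((P - a) * (b - c)) := by rw [hu, hv]; ring
  have h1 : ‖P - a‖ * Real.sqrt 3
      < ‖P - b‖ * Real.sqrt 3 + ‖P - c‖ * Real.sqrt 3 := by
    calc ‖P - a‖ * Real.sqrt 3
        = ‖(P - a) * (b - c)‖ := by rw [norm_mul, hbc]
      _ = ‖u + v‖ := by rw [hsum, norm_neg]
      _ < ‖u‖ + ‖v‖ := hlt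
      _ = _ := by rw [hu, hv, norm_mul, norm_mul, hca, hab]
  rw [← add_mul] at h1
  exact lt_of_mul_lt_mul_right h1 hs.le

/-- Pompeiu's theorem: for P not on the unit circle, the three distances to the
vertices of the inscribed equilateral triangle satisfy the strict triangle inequalities. -/
theorem stmt_0 (P : ℂ) (hP : ‖P‖ ≠ 1) :
    ‖P - A0‖ < ‖P - B0‖ + ‖P - C0‖ ∧
    ‖P - B0‖ < ‖P - C0‖ + ‖P - A0‖ ∧
    ‖P - C0‖ < ‖P - A0‖ + ‖P - B0‖ := by
  have hss : Real.sqrt 3 ^ 2 = 3 := Real.sq_sqrt (by norm_num)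
  have hsp : (0:ℝ) ≤ Real.sqrt 3 := Real.sqrt_nonneg 3
  have abs_coord : ∀ (x y r : ℝ), x ^ 2 + y ^ 2 = r ^ 2 → 0 ≤ r →
      ‖(x : ℂ) + (y : ℂ) * Complex.I‖ = r := by
    intro x y r h hr
    rw [Complex.norm_def, Complex.normSq_add_mul_I, h, Real.sqrt_sq hr]
  have e1 : Complex.exp ((Real.pi : ℂ) * Complex.I / 6)
      = ((Real.sqrt 3 / 2 : ℝ) : ℂ) + ((1 / 2 : ℝ) : ℂ) * Complex.I := by
    have h6 : (Real.pi : ℂ) * Complex.I / 6 = ((Real.pi / 6 : ℝ) : ℂ) * Complex.I := by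
      push_cast; ring
    rw [h6, Complex.exp_mul_I, ← Complex.ofReal_cos, ← Complex.ofReal_sin,
      Real.cos_pi_div_six, Real.sin_pi_div_six]
  have e2 : Complex.exp (-((Real.pi : ℂ) * Complex.I) / 6)
      = ((Real.sqrt 3 / 2 : ℝ) : ℂ) + ((-(1 / 2) : ℝ) : ℂ) * Complex.I := by
    have h6 : -((Real.pi : ℂ) * Complex.I) / 6 = ((-(Real.pi / 6) : ℝ) : ℂ) * Complex.I := by
      push_cast; ring
    rw [h6, Complex.exp_mul_I, ← Complex.ofReal_cos, ← Complex.ofReal_sin,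
      Real.cos_neg, Real.sin_neg, Real.cos_pi_div_six, Real.sin_pi_div_six]
  have hA1 : ‖A0‖ = 1 := by simp [A0]
  have hB1 : ‖B0‖ = 1 := by
    rw [B0, e1, norm_neg]
    exact abs_coord _ _ 1 (by nlinarith [hss]) (by norm_num)
  have hC1 : ‖C0‖ = 1 := by
    rw [C0, e2]
    exact abs_coord _ _ 1 (by nlinarith [hss]) (by norm_num)
  have dAB : A0 - B0 = ((Real.sqrt 3 / 2 : ℝ) : ℂ) + ((3 / 2 : ℝ) : ℂ) * Complex.I := by
    rw [A0, B0, e1]; push_cast; ring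
  have dBC : B0 - C0 = ((-Real.sqrt 3 : ℝ) : ℂ) + ((0 : ℝ) : ℂ) * Complex.I := by
    rw [B0, C0, e1, e2]; push_cast; ring
  have dCA : C0 - A0 = ((Real.sqrt 3 / 2 : ℝ) : ℂ) + ((-(3 / 2) : ℝ) : ℂ) * Complex.I := by
    rw [C0, A0, e2]; push_cast; ring
  have hAB : ‖A0 - B0‖ = Real.sqrt 3 := by
    rw [dAB]; exact abs_coord _ _ _ (by nlinarith [hss]) hsp
  have hBC : ‖B0 - C0‖ = Real.sqrt 3 := by
    rw [dBC]; exact abs_coord _ _ _ (by nlinarith [hss]) hsp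
  have hCA : ‖C0 - A0‖ = Real.sqrt 3 := by
    rw [dCA]; exact abs_coord _ _ _ (by nlinarith [hss]) hsp
  exact ⟨pomp P A0 B0 C0 hA1 hB1 hC1 hBC hCA hAB hP,
    pomp P B0 C0 A0 hB1 hC1 hA1 hCA hAB hBC hP,
    pomp P C0 A0 B0 hC1 hA1 hB1 hAB hBC hCA hP⟩
end

section
/- For any point P lying on the unit circle, the largest of the three distances |P - A₀|, |P - B₀|, |P - C₀| equals the sum of the other two (van Schooten's theorem). -/
open Complex

/-!
Write `P = exp (θ i)`; the vertices sit at the angles `π/2`, `7π/6`, `-π/6`, so the chord lengths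
are `|2 sin t|`, `|2 sin (t - π/3)|`, `|2 sin (t + π/3)|` with `t = (θ - π/2)/2`. Since
`sin (t - π/3) + sin (t + π/3) = 2 sin t cos (π/3) = sin t`, the first of three reals is the sum
of the other two, and for such reals the largest absolute value is the sum of the other two.
-/

open scoped Real

theorem abs_eq_add_abs_or_of_eq_add {a b c : ℝ} (h : a = b + c) :
    |a| = |b| + |c| ∨ |b| = |c| + |a| ∨ |c| = |a| + |b| := by
  subst h
  rcases abs_cases b with ⟨hb, _⟩ | ⟨hb, _⟩ <;> rcases abs_cases c with ⟨hc, _⟩ | ⟨hc, _⟩ <;>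
    rcases abs_cases (b + c) with ⟨hbc, _⟩ | ⟨hbc, _⟩ <;>
    first | (left; linarith) | (right; left; linarith) | (right; right; linarith)

theorem norm_exp_mul_I_sub_exp_mul_I (θ α : ℝ) :
    ‖exp (θ * I) - exp (α * I)‖ = |2 * Real.sin ((θ - α) / 2)| := by
  have h : exp (θ * I) - exp (α * I) = exp (α * I) * (exp (I * (θ - α : ℝ)) - 1) := by
    rw [mul_sub, mul_one, ← exp_add]
    push_cast
    ring_nf
  rw [h, norm_mul, norm_exp_ofReal_mul_I, one_mul, norm_exp_I_mul_ofReal_sub_one,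
    Real.norm_eq_abs]

theorem Real.sin_sub_pi_div_three_add_sin_add_pi_div_three (x : ℝ) :
    Real.sin (x - π / 3) + Real.sin (x + π / 3) = Real.sin x := by
  rw [Real.sin_sub, Real.sin_add, Real.cos_pi_div_three]
  ring

theorem A0_eq : A0 = exp ((π / 2 : ℝ) * I) := by
  rw [A0, ofReal_div, ofReal_ofNat, exp_pi_div_two_mul_I]

theorem B0_eq : B0 = exp ((7 * π / 6 : ℝ) * I) := by
  rw [B0, show ((7 * π / 6 : ℝ) : ℂ) * I = π * I + π * I / 6 by push_cast; ring, exp_add,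
    exp_pi_mul_I, neg_one_mul]

theorem C0_eq : C0 = exp ((-π / 6 : ℝ) * I) := by
  rw [C0]
  push_cast
  ring_nf

/-- van Schooten's theorem: for P on the unit circle, the largest of the three distances
equals the sum of the other two. -/
theorem stmt_1 (P : ℂ) (hP : ‖P‖ = 1) :
    ‖P - A0‖ = ‖P - B0‖ + ‖P - C0‖ ∨
    ‖P - B0‖ = ‖P - C0‖ + ‖P - A0‖ ∨
    ‖P - C0‖ = ‖P - A0‖ + ‖P - B0‖ := by
  obtain ⟨θ, rfl⟩ := (norm_eq_one_iff P).mp hP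
  rw [A0_eq, B0_eq, C0_eq, norm_exp_mul_I_sub_exp_mul_I, norm_exp_mul_I_sub_exp_mul_I,
    norm_exp_mul_I_sub_exp_mul_I]
  apply abs_eq_add_abs_or_of_eq_add
  rw [show (θ - 7 * π / 6) / 2 = (θ - π / 2) / 2 - π / 3 by ring,
    show (θ - -π / 6) / 2 = (θ - π / 2) / 2 + π / 3 by ring, ← mul_add,
    Real.sin_sub_pi_div_three_add_sin_add_pi_div_three]
end

section
/- For any positive reals a, b, c satisfying the three strict triangle inequalities, there exists a unique point P in the open unit disc such that |P - A₀| : |P - B₀| : |P - C₀| = a : b : c. -/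
open Complex

private lemma sq_bridge {k l X Y : ℝ} (hk : 0 ≤ k) (hl : 0 ≤ l) (hX : 0 ≤ X) (hY : 0 ≤ Y) :
    k * X = l * Y ↔ (k * X) ^ 2 = (l * Y) ^ 2 := by
  constructor
  · intro h; rw [h]
  · intro h
    have h2 : |k * X| = |l * Y| := by
      rw [← Real.sqrt_sq_eq_abs, ← Real.sqrt_sq_eq_abs, h]
    rwa [_root_.abs_of_nonneg (mul_nonneg hk hX), _root_.abs_of_nonneg (mul_nonneg hl hY)] at h2

private lemma key (a b c : ℝ) (ha : 0 < a) (hb : 0 < b) (hc : 0 < c)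
    (hab : a < b + c) (hbc : b < c + a) (hca : c < a + b) :
    ∃! p : ℝ × ℝ, p.1 ^ 2 + p.2 ^ 2 < 1 ∧
      b ^ 2 * (p.1 ^ 2 + (p.2 - 1) ^ 2)
        = a ^ 2 * ((p.1 + Real.sqrt 3 / 2) ^ 2 + (p.2 + 1 / 2) ^ 2) ∧
      c ^ 2 * (p.1 ^ 2 + (p.2 - 1) ^ 2)
        = a ^ 2 * ((p.1 - Real.sqrt 3 / 2) ^ 2 + (p.2 + 1 / 2) ^ 2) := by
  have h3 : Real.sqrt 3 ^ 2 = 3 := Real.sq_sqrt (by norm_num)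
  obtain ⟨r, hr⟩ : ∃ r : ℝ, r = Real.sqrt 3 := ⟨_, rfl⟩
  rw [← hr] at h3 ⊢
  have hpos : 0 < (a^2+b^2+c^2)^2 - (3*(b^2-c^2)^2 + (b^2+c^2-2*a^2)^2) := by
    have he : (a^2+b^2+c^2)^2 - (3*(b^2-c^2)^2 + (b^2+c^2-2*a^2)^2)
        = 3*((a+b+c)*((b+c-a)*((c+a-b)*(a+b-c)))) := by ring
    rw [he]
    have h1 : 0 < a+b+c := by linarith
    have h2 : 0 < b+c-a := by linarith
    have h4 : 0 < c+a-b := by linarith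
    have h5 : 0 < a+b-c := by linarith
    have := mul_pos h1 (mul_pos h2 (mul_pos h4 h5))
    linarith
  obtain ⟨D, hDdef⟩ :
      ∃ D : ℝ, D = Real.sqrt ((a^2+b^2+c^2)^2 - (3*(b^2-c^2)^2 + (b^2+c^2-2*a^2)^2)) :=
    ⟨_, rfl⟩
  have hD : D^2 = (a^2+b^2+c^2)^2 - (3*(b^2-c^2)^2 + (b^2+c^2-2*a^2)^2) := by
    rw [hDdef]; exact Real.sq_sqrt hpos.le
  have hDpos : 0 < D := by rw [hDdef]; exact Real.sqrt_pos.mpr hpos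
  have hq0 : 0 < a^2+b^2+c^2 := by positivity
  have hqD : 0 < a^2+b^2+c^2 + D := by linarith
  obtain ⟨u, hu0⟩ : ∃ u : ℝ, u = 1/(a^2+b^2+c^2+D) := ⟨_, rfl⟩
  have hupos : 0 < u := by rw [hu0]; positivity
  have hQ : u * (a^2+b^2+c^2+D) = 1 := by rw [hu0]; field_simp
  have hu : (3*(b^2-c^2)^2 + (b^2+c^2-2*a^2)^2)*u^2 - 2*(a^2+b^2+c^2)*u + 1 = 0 := by
    linear_combination (u*((a^2+b^2+c^2)-D) - 1) * hQ + u^2 * hD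
  have hs0 : (r*(b^2-c^2)*u)^2 + ((b^2+c^2-2*a^2)*u)^2 = 2*(a^2+b^2+c^2)*u - 1 := by
    linear_combination (b^2-c^2)^2*u^2*h3 + hu
  refine ⟨(r*(b^2-c^2)*u, (b^2+c^2-2*a^2)*u), ⟨?_, ?_, ?_⟩, ?_⟩
  · show (r*(b^2-c^2)*u)^2 + ((b^2+c^2-2*a^2)*u)^2 < 1
    rw [hs0]
    have hQl : (a^2+b^2+c^2)*u + D*u = 1 := by linear_combination hQ
    linarith [mul_pos hDpos hupos, hQl]
  · show b ^ 2 * ((r*(b^2-c^2)*u) ^ 2 + ((b^2+c^2-2*a^2)*u - 1) ^ 2)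
        = a ^ 2 * (((r*(b^2-c^2)*u) + r / 2) ^ 2 + ((b^2+c^2-2*a^2)*u + 1 / 2) ^ 2)
    linear_combination (b^2-a^2)*hs0 - (a^2*(b^2-c^2)*u + a^2/4)*h3
  · show c ^ 2 * ((r*(b^2-c^2)*u) ^ 2 + ((b^2+c^2-2*a^2)*u - 1) ^ 2)
        = a ^ 2 * (((r*(b^2-c^2)*u) - r / 2) ^ 2 + ((b^2+c^2-2*a^2)*u + 1 / 2) ^ 2)
    linear_combination (c^2-a^2)*hs0 + (a^2*(b^2-c^2)*u - a^2/4)*h3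
  · rintro ⟨x, y⟩ ⟨hlt, e1, e2⟩
    dsimp only at hlt e1 e2 ⊢
    have hy : 2*(a^2+b^2+c^2)*y = (b^2+c^2-2*a^2)*(x^2+y^2+1) := by
      linear_combination (-1)*e1 - e2 - a^2/2*h3
    have hxp : (b^2-c^2)*(x^2+(y-1)^2) = 2*a^2*r*x := by
      linear_combination e1 - e2
    have hq1 : (a^2+b^2+c^2)*(x^2+(y-1)^2) = 3*a^2*(x^2+y^2+1) := by
      linear_combination (-1)*hy
    have h5 : 2*a^2*r*(a^2+b^2+c^2)*x = 3*a^2*(b^2-c^2)*(x^2+y^2+1) := by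
      linear_combination (b^2-c^2)*hq1 - (a^2+b^2+c^2)*hxp
    have hx6 : (3*a^2) * (2*(a^2+b^2+c^2)*x) = (3*a^2) * (r*(b^2-c^2)*(x^2+y^2+1)) := by
      linear_combination r*h5 - 2*a^2*(a^2+b^2+c^2)*x*h3
    have hx : 2*(a^2+b^2+c^2)*x = r*(b^2-c^2)*(x^2+y^2+1) :=
      mul_left_cancel₀ (by positivity) hx6
    obtain ⟨v, hv⟩ : ∃ v : ℝ, v = (x^2+y^2+1)/(2*(a^2+b^2+c^2)) := ⟨_, rfl⟩
    have hvpos : 0 < v := by rw [hv]; positivity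
    have hQ' : 2*(a^2+b^2+c^2)*v = x^2+y^2+1 := by rw [hv]; field_simp
    have hxu6 : (2*(a^2+b^2+c^2))*x = (2*(a^2+b^2+c^2))*(r*(b^2-c^2)*v) := by
      linear_combination hx - r*(b^2-c^2)*hQ'
    have hxu : x = r*(b^2-c^2)*v := mul_left_cancel₀ (by positivity) hxu6
    have hyu6 : (2*(a^2+b^2+c^2))*y = (2*(a^2+b^2+c^2))*((b^2+c^2-2*a^2)*v) := by
      linear_combination hy - (b^2+c^2-2*a^2)*hQ'
    have hyu : y = (b^2+c^2-2*a^2)*v := mul_left_cancel₀ (by positivity) hyu6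
    have hu' : (3*(b^2-c^2)^2 + (b^2+c^2-2*a^2)^2)*v^2 - 2*(a^2+b^2+c^2)*v + 1 = 0 := by
      linear_combination (-1)*hQ' - (x + r*(b^2-c^2)*v)*hxu
        - (y + (b^2+c^2-2*a^2)*v)*hyu - (b^2-c^2)^2*v^2*h3
    have hfac : (v - u) * ((3*(b^2-c^2)^2 + (b^2+c^2-2*a^2)^2)*(v+u) - 2*(a^2+b^2+c^2)) = 0 := by
      linear_combination hu' - hu
    rcases mul_eq_zero.mp hfac with h | h
    · have hvu : v = u := by linarith
      simp only [Prod.mk.injEq]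
      constructor
      · rw [hxu, hvu]
      · rw [hyu, hvu]
    · exfalso
      have h7 : ((3*(b^2-c^2)^2 + (b^2+c^2-2*a^2)^2)*v) * (a^2+b^2+c^2+D)
          = (a^2+b^2+c^2+D) * (a^2+b^2+c^2+D) := by
        linear_combination (a^2+b^2+c^2+D)*h - (3*(b^2-c^2)^2+(b^2+c^2-2*a^2)^2)*hQ - hD
      have hKu' : (3*(b^2-c^2)^2 + (b^2+c^2-2*a^2)^2)*v = a^2+b^2+c^2+D :=
        mul_right_cancel₀ (ne_of_gt hqD) h7
      have h8 : (a^2+b^2+c^2-D)*v = 1 := by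
        linear_combination v*hKu' - hu'
      have h9 : (a^2+b^2+c^2)*v - D*v = 1 := by linear_combination h8
      linarith [mul_pos hDpos hvpos, h9, hQ', hlt]

/-- For side lengths a,b,c of a nondegenerate triangle there is a unique point P in the
open unit disc with |P-A0| : |P-B0| : |P-C0| = a : b : c. -/
theorem stmt_2 (a b c : ℝ) (ha : 0 < a) (hb : 0 < b) (hc : 0 < c)
    (hab : a < b + c) (hbc : b < c + a) (hca : c < a + b) :
    ∃! P : ℂ, ‖P‖ < 1 ∧
      b * ‖P - A0‖ = a * ‖P - B0‖ ∧
      c * ‖P - A0‖ = a * ‖P - C0‖ := by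
  have hB : B0 = -(((Real.sqrt 3 : ℝ) : ℂ)/2 + Complex.I/2) := by
    rw [show B0 = -Complex.exp ((Real.pi : ℂ) * Complex.I / 6) from rfl]
    rw [show (Real.pi : ℂ) * Complex.I / 6 = ((Real.pi/6 : ℝ) : ℂ) * Complex.I by
      push_cast; ring]
    rw [Complex.exp_mul_I, ← Complex.ofReal_cos, ← Complex.ofReal_sin,
      Real.cos_pi_div_six, Real.sin_pi_div_six]
    push_cast; ring
  have hC : C0 = ((Real.sqrt 3 : ℝ) : ℂ)/2 - Complex.I/2 := by
    rw [show C0 = Complex.exp (-((Real.pi : ℂ) * Complex.I) / 6) from rfl]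
    rw [show -((Real.pi : ℂ) * Complex.I) / 6 = ((-(Real.pi/6) : ℝ) : ℂ) * Complex.I by
      push_cast; ring]
    rw [Complex.exp_mul_I, ← Complex.ofReal_cos, ← Complex.ofReal_sin,
      Real.cos_neg, Real.sin_neg, Real.cos_pi_div_six, Real.sin_pi_div_six]
    push_cast; ring
  have hAre : A0.re = 0 := by simp [A0]
  have hAim : A0.im = 1 := by simp [A0]
  have hBre : B0.re = -(Real.sqrt 3/2) := by rw [hB]; simp
  have hBim : B0.im = -(1/2) := by rw [hB]; simp
  have hCre : C0.re = Real.sqrt 3/2 := by rw [hC]; simp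
  have hCim : C0.im = -(1/2) := by rw [hC]; simp
  have habs2 : ∀ z : ℂ, (‖z‖)^2 = z.re^2 + z.im^2 := fun z => by
    rw [Complex.sq_norm, Complex.normSq_apply]; ring
  have hiff : ∀ P : ℂ,
      (‖P‖ < 1 ∧
        b * ‖P - A0‖ = a * ‖P - B0‖ ∧
        c * ‖P - A0‖ = a * ‖P - C0‖) ↔
      (P.re ^ 2 + P.im ^ 2 < 1 ∧
        b ^ 2 * (P.re ^ 2 + (P.im - 1) ^ 2)
          = a ^ 2 * ((P.re + Real.sqrt 3 / 2) ^ 2 + (P.im + 1 / 2) ^ 2) ∧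
        c ^ 2 * (P.re ^ 2 + (P.im - 1) ^ 2)
          = a ^ 2 * ((P.re - Real.sqrt 3 / 2) ^ 2 + (P.im + 1 / 2) ^ 2)) := by
    intro P
    have hlt : ‖P‖ < 1 ↔ P.re ^ 2 + P.im ^ 2 < 1 := by
      constructor <;> intro h <;>
        nlinarith [habs2 P, norm_nonneg P,
          sq_nonneg (‖P‖ - 1), sq_nonneg (‖P‖ + 1)]
    have he1 : b * ‖P - A0‖ = a * ‖P - B0‖ ↔
        b ^ 2 * (P.re ^ 2 + (P.im - 1) ^ 2)
          = a ^ 2 * ((P.re + Real.sqrt 3 / 2) ^ 2 + (P.im + 1 / 2) ^ 2) := by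
      rw [sq_bridge hb.le ha.le (norm_nonneg _) (norm_nonneg _),
        mul_pow, mul_pow, habs2, habs2, Complex.sub_re, Complex.sub_im,
        Complex.sub_re, Complex.sub_im, hAre, hAim, hBre, hBim]
      constructor <;> intro h <;> linear_combination h
    have he2 : c * ‖P - A0‖ = a * ‖P - C0‖ ↔
        c ^ 2 * (P.re ^ 2 + (P.im - 1) ^ 2)
          = a ^ 2 * ((P.re - Real.sqrt 3 / 2) ^ 2 + (P.im + 1 / 2) ^ 2) := by
      rw [sq_bridge hc.le ha.le (norm_nonneg _) (norm_nonneg _),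
        mul_pow, mul_pow, habs2, habs2, Complex.sub_re, Complex.sub_im,
        Complex.sub_re, Complex.sub_im, hAre, hAim, hCre, hCim]
      constructor <;> intro h <;> linear_combination h
    rw [hlt, he1, he2]
  obtain ⟨p, hp, hup⟩ := key a b c ha hb hc hab hbc hca
  refine ⟨⟨p.1, p.2⟩, ?_, ?_⟩
  · exact (hiff _).mpr hp
  · intro P hP
    have h := hup (P.re, P.im) ((hiff P).mp hP)
    have h1 : P.re = p.1 := congrArg Prod.fst h
    have h2 : P.im = p.2 := congrArg Prod.snd h
    exact Complex.ext h1 h2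
end

section
/- For any positive reals a, b, c satisfying the three strict triangle inequalities and not all equal, there exists a unique point P' with |P'| > 1 such that |P' - A₀| : |P' - B₀| : |P' - C₀| = a : b : c. -/
open Complex

lemma A0_re : A0.re = 0 := by simp [A0]
lemma A0_im : A0.im = 1 := by simp [A0]

lemma B0_re : B0.re = -(Real.sqrt 3 / 2) := by
  have h : ((Real.pi : ℂ) * Complex.I / 6) = ((Real.pi/6 : ℝ) : ℂ) * Complex.I := by
    push_cast; ring
  rw [B0, h, Complex.neg_re, Complex.exp_ofReal_mul_I_re, Real.cos_pi_div_six]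

lemma B0_im : B0.im = -(1/2) := by
  have h : ((Real.pi : ℂ) * Complex.I / 6) = ((Real.pi/6 : ℝ) : ℂ) * Complex.I := by
    push_cast; ring
  rw [B0, h, Complex.neg_im, Complex.exp_ofReal_mul_I_im, Real.sin_pi_div_six]

lemma C0_re : C0.re = Real.sqrt 3 / 2 := by
  have h : (-((Real.pi : ℂ) * Complex.I) / 6) = ((-(Real.pi/6) : ℝ) : ℂ) * Complex.I := by
    push_cast; ring
  rw [C0, h, Complex.exp_ofReal_mul_I_re, Real.cos_neg, Real.cos_pi_div_six]

lemma C0_im : C0.im = -(1/2) := by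
  have h : (-((Real.pi : ℂ) * Complex.I) / 6) = ((-(Real.pi/6) : ℝ) : ℂ) * Complex.I := by
    push_cast; ring
  rw [C0, h, Complex.exp_ofReal_mul_I_im, Real.sin_neg, Real.sin_pi_div_six]

lemma abs_sq' (z : ℂ) : (‖z‖)^2 = z.re^2 + z.im^2 := by
  rw [Complex.sq_norm, Complex.normSq_apply]; ring

lemma sq_eq_of_nonneg {u v : ℝ} (hu : 0 ≤ u) (hv : 0 ≤ v) (h : u^2 = v^2) : u = v :=
  (pow_left_inj₀ hu hv (by norm_num)).mp h

set_option maxHeartbeats 2000000 in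
/-- For side lengths a,b,c of a nondegenerate, non-equilateral triangle there is a unique
point P' outside the closed unit disc with |P'-A0| : |P'-B0| : |P'-C0| = a : b : c. -/
theorem stmt_3 (a b c : ℝ) (ha : 0 < a) (hb : 0 < b) (hc : 0 < c)
    (hab : a < b + c) (hbc : b < c + a) (hca : c < a + b)
    (hne : ¬(a = b ∧ b = c)) :
    ∃! P' : ℂ, 1 < ‖P'‖ ∧
      b * ‖P' - A0‖ = a * ‖P' - B0‖ ∧
      c * ‖P' - A0‖ = a * ‖P' - C0‖ := by
  obtain ⟨r, hrdef⟩ : ∃ r : ℝ, r = Real.sqrt 3 := ⟨_, rfl⟩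
  have hr0 : (0:ℝ) < r := by rw [hrdef]; positivity
  have hr2 : r^2 = 3 := by rw [hrdef]; exact Real.sq_sqrt (by norm_num)
  obtain ⟨S, hSdef⟩ : ∃ S : ℝ, S = a^2 + b^2 + c^2 := ⟨_, rfl⟩
  obtain ⟨M, hMdef⟩ : ∃ M : ℝ,
      M = a^4 + b^4 + c^4 - a^2*b^2 - b^2*c^2 - c^2*a^2 := ⟨_, rfl⟩
  have hS0 : (0:ℝ) < S := by rw [hSdef]; positivity
  have hM0 : (0:ℝ) < M := by
    rw [hMdef]
    rcases not_and_or.mp hne with h | h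
    · have h1 : 0 < (a - b)^2 := by
        have : a - b ≠ 0 := sub_ne_zero.mpr h
        positivity
      nlinarith [sq_nonneg (b^2 - c^2), sq_nonneg (c^2 - a^2),
        mul_pos h1 (by positivity : (0:ℝ) < (a+b)^2)]
    · have h1 : 0 < (b - c)^2 := by
        have : b - c ≠ 0 := sub_ne_zero.mpr h
        positivity
      nlinarith [sq_nonneg (a^2 - b^2), sq_nonneg (c^2 - a^2),
        mul_pos h1 (by positivity : (0:ℝ) < (b+c)^2)]
  obtain ⟨N, hNdef⟩ : ∃ N : ℝ, N = S^2 - 4*M := ⟨_, rfl⟩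
  have hN0 : (0:ℝ) < N := by
    have h1 : (0:ℝ) < a + b + c := by linarith
    have h2 : (0:ℝ) < b + c - a := by linarith
    have h3 : (0:ℝ) < c + a - b := by linarith
    have h4 : (0:ℝ) < a + b - c := by linarith
    rw [hNdef, hSdef, hMdef]
    nlinarith [mul_pos (mul_pos (mul_pos h1 h2) h3) h4]
  obtain ⟨w, hwdef⟩ : ∃ w : ℝ, w = Real.sqrt N := ⟨_, rfl⟩
  have hw0 : (0:ℝ) < w := by rw [hwdef]; exact Real.sqrt_pos.mpr hN0
  have hw2 : w^2 = N := by rw [hwdef]; exact Real.sq_sqrt hN0.le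
  have hwS : w < S := by nlinarith [hw2, hNdef, hM0, hS0, hw0]
  obtain ⟨t, htdef⟩ : ∃ t : ℝ, t = (S + w) / (4*M) := ⟨_, rfl⟩
  have ht0 : (0:ℝ) < t := by rw [htdef]; positivity
  obtain ⟨x', hxdef⟩ : ∃ x' : ℝ, x' = r * (b^2 - c^2) * t := ⟨_, rfl⟩
  obtain ⟨y', hydef⟩ : ∃ y' : ℝ, y' = (b^2 + c^2 - 2*a^2) * t := ⟨_, rfl⟩
  obtain ⟨s, hsdef⟩ : ∃ s : ℝ, s = 2*S*t := ⟨_, rfl⟩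
  have hs2 : 2 < s := by
    have hrepr : s = 2*S*(S+w)/(4*M) := by rw [hsdef, htdef]; ring
    rw [hrepr, lt_div_iff₀ (by positivity)]
    linarith [hNdef, hw2, mul_pos hS0 hw0, sq_nonneg w]
  have hqt : 4*M*t^2 - 2*S*t + 1 = 0 := by
    rw [htdef]
    field_simp
    linear_combination hw2 + hNdef
  have hq : M*s^2 - S^2*s + S^2 = 0 := by
    rw [hsdef]; linear_combination S^2 * hqt
  have h4M : 3*(b^2-c^2)^2 + (b^2+c^2-2*a^2)^2 = 4*M := by rw [hMdef]; ring
  have hsxy : x'^2 + y'^2 + 1 = s := by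
    rw [hxdef, hydef, hsdef]
    linear_combination hqt + ((b^2-c^2)*t)^2 * hr2 + t^2 * h4M
  obtain ⟨P0, hP0def⟩ : ∃ P0 : ℂ, P0 = (x' : ℂ) + (y' : ℂ) * Complex.I := ⟨_, rfl⟩
  have hP0re : P0.re = x' := by rw [hP0def]; simp
  have hP0im : P0.im = y' := by rw [hP0def]; simp
  have dA : ∀ P : ℂ, (‖P - A0‖)^2 = P.re^2 + (P.im - 1)^2 := by
    intro P
    rw [abs_sq']
    simp [Complex.sub_re, Complex.sub_im, A0_re, A0_im]
  have dB : ∀ P : ℂ, (‖P - B0‖)^2 = (P.re + r/2)^2 + (P.im + 1/2)^2 := by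
    intro P
    rw [abs_sq', hrdef]
    simp only [Complex.sub_re, Complex.sub_im, B0_re, B0_im]
    ring
  have dC : ∀ P : ℂ, (‖P - C0‖)^2 = (P.re - r/2)^2 + (P.im + 1/2)^2 := by
    intro P
    rw [abs_sq', hrdef]
    simp only [Complex.sub_re, Complex.sub_im, C0_re, C0_im]
    ring
  refine ⟨P0, ⟨?_, ?_, ?_⟩, ?_⟩
  · -- 1 < |P0|
    have h1 : 1 < (‖P0‖)^2 := by
      rw [abs_sq', hP0re, hP0im]; linarith [hsxy, hs2]
    exact (one_lt_pow_iff_of_nonneg (norm_nonneg P0) two_ne_zero).mp h1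
  · -- first ratio equation
    apply sq_eq_of_nonneg (mul_nonneg hb.le (norm_nonneg _))
      (mul_nonneg ha.le (norm_nonneg _))
    rw [mul_pow, mul_pow, dA, dB, hP0re, hP0im]
    have e1 : x'^2 + (y' - 1)^2 = s - 2*y' := by linear_combination hsxy
    have e2 : (x' + r/2)^2 + (y' + 1/2)^2 = s + r*x' + y' := by
      linear_combination hsxy + (1/4) * hr2
    rw [e1, e2, hxdef, hydef, hsdef, hSdef]
    linear_combination (-(a^2*(b^2-c^2)*t)) * hr2
  · -- second ratio equation
    apply sq_eq_of_nonneg (mul_nonneg hc.le (norm_nonneg _))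
      (mul_nonneg ha.le (norm_nonneg _))
    rw [mul_pow, mul_pow, dA, dC, hP0re, hP0im]
    have e1 : x'^2 + (y' - 1)^2 = s - 2*y' := by linear_combination hsxy
    have e3 : (x' - r/2)^2 + (y' + 1/2)^2 = s - r*x' + y' := by
      linear_combination hsxy + (1/4) * hr2
    rw [e1, e3, hxdef, hydef, hsdef, hSdef]
    linear_combination (a^2*(b^2-c^2)*t) * hr2
  · -- uniqueness
    rintro P ⟨hP1, hPe1, hPe2⟩
    obtain ⟨x, hxP⟩ : ∃ x : ℝ, x = P.re := ⟨_, rfl⟩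
    obtain ⟨y, hyP⟩ : ∃ y : ℝ, y = P.im := ⟨_, rfl⟩
    obtain ⟨sP, hsPdef⟩ : ∃ sP : ℝ, sP = x^2 + y^2 + 1 := ⟨_, rfl⟩
    have hsP2 : 2 < sP := by
      have h1 : (‖P‖)^2 = x^2 + y^2 := by rw [abs_sq', ← hxP, ← hyP]
      have h2 : 1 < (‖P‖)^2 := one_lt_pow₀ hP1 two_ne_zero
      linarith [hsPdef, h1, h2]
    have q1 : b^2 * (x^2 + (y-1)^2) = a^2 * ((x + r/2)^2 + (y + 1/2)^2) := by
      have h := congrArg (·^2) hPe1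
      simp only [mul_pow] at h
      rw [dA, dB, ← hxP, ← hyP] at h
      exact h
    have q2 : c^2 * (x^2 + (y-1)^2) = a^2 * ((x - r/2)^2 + (y + 1/2)^2) := by
      have h := congrArg (·^2) hPe2
      simp only [mul_pow] at h
      rw [dA, dC, ← hxP, ← hyP] at h
      exact h
    have E1 : b^2 * (sP - 2*y) = a^2 * (sP + r*x + y) := by
      rw [hsPdef]
      linear_combination q1 + (a^2/4) * hr2
    have E2 : c^2 * (sP - 2*y) = a^2 * (sP - r*x + y) := by
      rw [hsPdef]
      linear_combination q2 + (a^2/4) * hr2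
    have hy : 2*S*y = (b^2 + c^2 - 2*a^2) * sP := by
      rw [hSdef]; linear_combination -E1 - E2
    have hx : 2*S*x = r*(b^2 - c^2) * sP := by
      have haux : 3*a^2 * (2*S*x - r*(b^2-c^2)*sP) = 0 := by
        rw [hSdef]
        rw [hSdef] at hy
        linear_combination (-(r*(a^2+b^2+c^2))) * E1 + (r*(a^2+b^2+c^2)) * E2
          - (r*(b^2-c^2)) * hy - (2*a^2*(a^2+b^2+c^2)*x) * hr2
      have h3a : (3*a^2 : ℝ) ≠ 0 := by positivity
      rcases mul_eq_zero.mp haux with h | h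
      · exact absurd h h3a
      · linarith
    have hx2 : (2*S*x)^2 = (r*(b^2-c^2)*sP)^2 := by rw [hx]
    have hy2 : (2*S*y)^2 = ((b^2+c^2-2*a^2)*sP)^2 := by rw [hy]
    have hqP : M*sP^2 - S^2*sP + S^2 = 0 := by
      linear_combination (-1/4)*hx2 + (-1/4)*hy2
        - ((b^2-c^2)^2*sP^2/4)*hr2 + (sP^2/4)*h4M - S^2*hsPdef + 2*sP^2*hMdef
    obtain ⟨slo, hslodef⟩ : ∃ slo : ℝ, slo = S*(S - w)/(2*M) := ⟨_, rfl⟩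
    have hslo2 : slo < 2 := by
      rw [hslodef, div_lt_iff₀ (by positivity)]
      linarith [hw2, hNdef, mul_lt_mul_of_pos_right hwS hw0]
    have hsum : M*(s + slo) = S^2 := by
      rw [hsdef, htdef, hslodef]
      field_simp
      ring
    have hprod : M*(s*slo) = S^2 := by
      rw [hsdef, htdef, hslodef]
      have hrepr : M*((2*S*((S+w)/(4*M)))*(S*(S-w)/(2*M))) = S^2 := by
        field_simp
        linear_combination (-1)*hw2 + (-1)*hNdef
      exact hrepr
    have hfac : M*(sP - s)*(sP - slo) = 0 := by
      linear_combination hqP - sP * hsum + hprod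
    have hsPs : sP = s := by
      rcases mul_eq_zero.mp hfac with h | h
      · rcases mul_eq_zero.mp h with h' | h'
        · exact absurd h' hM0.ne'
        · linarith
      · have : sP - slo > 0 := by linarith
        linarith
    have h2S : (2*S : ℝ) ≠ 0 := by positivity
    have hxx : x = x' := by
      apply mul_left_cancel₀ h2S
      rw [hx, hsPs, hxdef, hsdef]; ring
    have hyy : y = y' := by
      apply mul_left_cancel₀ h2S
      rw [hy, hsPs, hydef, hsdef]; ring
    apply Complex.ext
    · rw [hP0re, ← hxx, hxP]
    · rw [hP0im, ← hyy, hyP]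
end

section
/- Let a, b, c be positive reals satisfying the strict triangle inequalities and let σ = X + iY with X = (a² + c² - b²)/(2a²), Y = √(-a⁴-b⁴-c⁴+2a²b²+2b²c²+2c²a²)/(2a²). Then (σ - ρ)/(σ - ρ̄) = (-2a² + b² + c² + √3(b² - c²)i) / (a² + b² + c² + √3·√(-a⁴-b⁴-c⁴+2a²b²+2b²c²+2c²a²)), where ρ = e^{πi/3}. -/
open Complex

noncomputable def rho : ℂ := Complex.exp ((Real.pi : ℂ) * Complex.I / 3)

lemma rho_eq : rho = ((1/2 : ℝ) : ℂ) + ((Real.sqrt 3 / 2 : ℝ) : ℂ) * Complex.I := by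
  have h : ((Real.pi : ℂ) * Complex.I / 3) = ((Real.pi / 3 : ℝ) : ℂ) * Complex.I := by
    push_cast; ring
  rw [rho, h, Complex.exp_mul_I, ← Complex.ofReal_cos, ← Complex.ofReal_sin,
    Real.cos_pi_div_three, Real.sin_pi_div_three]

/-- The shape invariant phi of the triangle with side lengths a, b, c expressed
purely in terms of a, b, c. -/
theorem stmt_9 (a b c : ℝ) (ha : 0 < a) (hb : 0 < b) (hc : 0 < c)
    (hab : a < b + c) (hbc : b < c + a) (hca : c < a + b) :
    ((((a ^ 2 + c ^ 2 - b ^ 2) / (2 * a ^ 2) : ℝ) : ℂ) +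
        ((Real.sqrt (-a ^ 4 - b ^ 4 - c ^ 4 + 2 * a ^ 2 * b ^ 2 + 2 * b ^ 2 * c ^ 2 +
            2 * c ^ 2 * a ^ 2) / (2 * a ^ 2) : ℝ) : ℂ) * Complex.I - rho) /
      ((((a ^ 2 + c ^ 2 - b ^ 2) / (2 * a ^ 2) : ℝ) : ℂ) +
        ((Real.sqrt (-a ^ 4 - b ^ 4 - c ^ 4 + 2 * a ^ 2 * b ^ 2 + 2 * b ^ 2 * c ^ 2 +
            2 * c ^ 2 * a ^ 2) / (2 * a ^ 2) : ℝ) : ℂ) * Complex.I - (starRingEnd ℂ) rho) =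
      (((-2 * a ^ 2 + b ^ 2 + c ^ 2 : ℝ) : ℂ) +
          ((Real.sqrt 3 * (b ^ 2 - c ^ 2) : ℝ) : ℂ) * Complex.I) /
        (((a ^ 2 + b ^ 2 + c ^ 2 + Real.sqrt 3 *
            Real.sqrt (-a ^ 4 - b ^ 4 - c ^ 4 + 2 * a ^ 2 * b ^ 2 + 2 * b ^ 2 * c ^ 2 +
              2 * c ^ 2 * a ^ 2) : ℝ) : ℂ)) := by
  have hQ : (0:ℝ) ≤ -a ^ 4 - b ^ 4 - c ^ 4 + 2 * a ^ 2 * b ^ 2 + 2 * b ^ 2 * c ^ 2 +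
      2 * c ^ 2 * a ^ 2 := by
    have : -a ^ 4 - b ^ 4 - c ^ 4 + 2 * a ^ 2 * b ^ 2 + 2 * b ^ 2 * c ^ 2 + 2 * c ^ 2 * a ^ 2
        = (a + b + c) * (b + c - a) * (c + a - b) * (a + b - c) := by ring
    rw [this]
    have h1 : 0 < a + b + c := by linarith
    have h2 : 0 < b + c - a := by linarith
    have h3 : 0 < c + a - b := by linarith
    have h4 : 0 < a + b - c := by linarith
    positivity
  set s := Real.sqrt (-a ^ 4 - b ^ 4 - c ^ 4 + 2 * a ^ 2 * b ^ 2 + 2 * b ^ 2 * c ^ 2 +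
      2 * c ^ 2 * a ^ 2) with hsdef
  have hs : s ^ 2 = -a ^ 4 - b ^ 4 - c ^ 4 + 2 * a ^ 2 * b ^ 2 + 2 * b ^ 2 * c ^ 2 +
      2 * c ^ 2 * a ^ 2 := Real.sq_sqrt hQ
  have hsnn : 0 ≤ s := Real.sqrt_nonneg _
  have ht : Real.sqrt 3 ^ 2 = 3 := Real.sq_sqrt (by norm_num)
  have htpos : (0:ℝ) < Real.sqrt 3 := Real.sqrt_pos.2 (by norm_num)
  have ha2 : (0:ℝ) < a ^ 2 := by positivity
  have hconj : (starRingEnd ℂ) rho = ((1/2 : ℝ) : ℂ) - ((Real.sqrt 3 / 2 : ℝ) : ℂ) * Complex.I := by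
    rw [rho_eq, map_add, map_mul, Complex.conj_ofReal, Complex.conj_ofReal, Complex.conj_I]
    ring
  have hden1 : ((((a ^ 2 + c ^ 2 - b ^ 2) / (2 * a ^ 2) : ℝ) : ℂ) +
      ((s / (2 * a ^ 2) : ℝ) : ℂ) * Complex.I - (starRingEnd ℂ) rho) ≠ 0 := by
    rw [hconj]
    intro h
    have him := congrArg Complex.im h
    simp only [Complex.sub_im, Complex.add_im, Complex.mul_im, Complex.ofReal_im,
      Complex.ofReal_re, Complex.I_im, Complex.I_re, Complex.zero_im] at him
    have hpos : (0:ℝ) < s / (2 * a ^ 2) + Real.sqrt 3 / 2 := by positivity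
    nlinarith [him]
  have hden2 : (((a ^ 2 + b ^ 2 + c ^ 2 + Real.sqrt 3 * s : ℝ) : ℂ)) ≠ 0 := by
    rw [Complex.ofReal_ne_zero]
    have : (0:ℝ) < a ^ 2 + b ^ 2 + c ^ 2 + Real.sqrt 3 * s := by positivity
    linarith
  rw [div_eq_div_iff hden1 hden2, hconj, rho_eq]
  apply Complex.ext
  · simp only [Complex.add_re, Complex.add_im, Complex.sub_re, Complex.sub_im,
      Complex.mul_re, Complex.mul_im, Complex.ofReal_re, Complex.ofReal_im,
      Complex.I_re, Complex.I_im]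
    field_simp
    linear_combination (a ^ 2 * (b ^ 2 - c ^ 2)) * ht
  · simp only [Complex.add_re, Complex.add_im, Complex.sub_re, Complex.sub_im,
      Complex.mul_re, Complex.mul_im, Complex.ofReal_re, Complex.ofReal_im,
      Complex.I_re, Complex.I_im]
    field_simp
    linear_combination Real.sqrt 3 * hs - a ^ 2 * s * ht
end

section
/- Let z = x + yi ∈ ℂ and set a = |z - A₀|, b = |z - B₀|, c = |z - C₀| where A₀ = i, B₀ = -e^{πi/6}, C₀ = e^{-πi/6}. Then -a⁴ - b⁴ - c⁴ + 2a²b² + 2b²c² + 2c²a² = 3(1 - x² - y²)². -/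
open Complex

lemma expval : Complex.exp ((Real.pi : ℂ) * Complex.I / 6)
    = ((Real.sqrt 3 / 2 : ℝ) : ℂ) + ((1/2 : ℝ) : ℂ) * Complex.I := by
  have h : (Real.pi : ℂ) * Complex.I / 6 = ((Real.pi / 6 : ℝ) : ℂ) * Complex.I := by
    push_cast; ring
  rw [h, Complex.exp_mul_I, ← Complex.ofReal_cos, ← Complex.ofReal_sin,
    Real.cos_pi_div_six, Real.sin_pi_div_six]

lemma expval' : Complex.exp (-((Real.pi : ℂ) * Complex.I) / 6)
    = ((Real.sqrt 3 / 2 : ℝ) : ℂ) - ((1/2 : ℝ) : ℂ) * Complex.I := by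
  have h : -((Real.pi : ℂ) * Complex.I) / 6 = ((-(Real.pi / 6) : ℝ) : ℂ) * Complex.I := by
    push_cast; ring
  rw [h, Complex.exp_mul_I, ← Complex.ofReal_cos, ← Complex.ofReal_sin,
    Real.cos_neg, Real.sin_neg, Real.cos_pi_div_six, Real.sin_pi_div_six]
  push_cast; ring

theorem stmt_12 (x y : ℝ) (a b c : ℝ)
    (ha : a = ‖(x : ℂ) + (y : ℂ) * Complex.I - A0‖)
    (hb : b = ‖(x : ℂ) + (y : ℂ) * Complex.I - B0‖)
    (hc : c = ‖(x : ℂ) + (y : ℂ) * Complex.I - C0‖) :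
    -a ^ 4 - b ^ 4 - c ^ 4 + 2 * a ^ 2 * b ^ 2 + 2 * b ^ 2 * c ^ 2 + 2 * c ^ 2 * a ^ 2 =
      3 * (1 - x ^ 2 - y ^ 2) ^ 2 := by
  set s := Real.sqrt 3 with hs
  have hs3 : s ^ 2 = 3 := Real.sq_sqrt (by norm_num)
  have ha2 : a ^ 2 = x ^ 2 + (y - 1) ^ 2 := by
    rw [ha, Complex.sq_norm, Complex.normSq_apply, A0]
    simp [Complex.sub_re, Complex.sub_im]
    ring
  have hb2 : b ^ 2 = (x + s / 2) ^ 2 + (y + 1 / 2) ^ 2 := by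
    rw [hb, Complex.sq_norm, Complex.normSq_apply, B0, expval]
    simp [Complex.sub_re, Complex.sub_im, Complex.add_re, Complex.add_im]
    ring
  have hc2 : c ^ 2 = (x - s / 2) ^ 2 + (y + 1 / 2) ^ 2 := by
    rw [hc, Complex.sq_norm, Complex.normSq_apply, C0, expval']
    simp [Complex.sub_re, Complex.sub_im]
    ring
  have e4 : ∀ t : ℝ, t ^ 4 = (t ^ 2) ^ 2 := fun t => by ring
  rw [e4 a, e4 b, e4 c, ha2, hb2, hc2]
  nlinarith [hs3, sq_nonneg s]
end

section
/- Let q ∈ ℝ and let ABC be a positively oriented triangle with shape invariant φ = (A + ρ²B + ρ⁴C)/(A + ρ⁴B + ρ²C) ≠ 0, where ρ = e^{πi/3}. Let A'' = qB + (1-q)C, B'' = qC + (1-q)A, C'' = qA + (1-q)B (the q-equidivision operation). If A'' + ρ⁴B'' + ρ²C'' ≠ 0, then the shape invariant φ'' of triangle A''B''C'' satisfies φ'' = e^{iθ}φ with θ = 2·arctan(√3(2q-1)); in particular |φ''| = |φ|. -/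
open Complex

/-!
Write `ω = ρ²`, a primitive cube root of unity. The numerator `A + ωB + ω²C` of `φ` is a discrete
Fourier coefficient of the vertex sequence, and equidivision is a circulant operation, so it
multiplies that coefficient by `qω² + (1 - q)ω = -(1 + tI)/2` with `t = √3 (2q - 1)`; the
denominator `A + ω²B + ωC` is multiplied by the conjugate factor `-(1 - tI)/2`. Hence `φ''/φ` is
`(1 + tI)/(1 - tI) = exp (2 arctan t · I)`, a unimodular number.
-/

theorem equidivision_fourierCoeff {R : Type*} [CommRing R] {ω : R} (hω : ω ^ 3 = 1)
    (q A B C : R) :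
    (q * B + (1 - q) * C) + ω * (q * C + (1 - q) * A) + ω ^ 2 * (q * A + (1 - q) * B) =
      (q * ω ^ 2 + (1 - q) * ω) * (A + ω * B + ω ^ 2 * C) := by
  linear_combination (-(q * B) - (1 - q) * C - q * ω * C) * hω

theorem ofReal_sqrt_three_sq : ((Real.sqrt 3 : ℝ) : ℂ) ^ 2 = 3 := by
  exact_mod_cast Real.sq_sqrt (by norm_num : (0 : ℝ) ≤ 3)

theorem rho_sq : rho ^ 2 = (-1 + (Real.sqrt 3 : ℂ) * I) / 2 := by
  have hcos_sin :
      rho = ((Real.cos (Real.pi / 3) : ℝ) : ℂ) + ((Real.sin (Real.pi / 3) : ℝ) : ℂ) * I := by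
    rw [rho, ofReal_cos, ofReal_sin, ← exp_mul_I]
    push_cast
    ring_nf
  rw [hcos_sin, Real.cos_pi_div_three, Real.sin_pi_div_three]
  push_cast
  linear_combination (1 / 4 * I ^ 2) * ofReal_sqrt_three_sq + (3 / 4) * I_sq

theorem rho_pow_six : rho ^ 6 = 1 := by
  rw [rho, ← Complex.exp_nat_mul]
  convert Complex.exp_two_pi_mul_I using 2
  push_cast
  ring

theorem equidivision_factor_rho_sq (q : ℝ) :
    (q : ℂ) * (rho ^ 2) ^ 2 + (1 - q) * rho ^ 2 =
      -(1 + ((Real.sqrt 3 * (2 * q - 1) : ℝ) : ℂ) * I) / 2 := by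
  rw [rho_sq]
  push_cast
  linear_combination (q / 4 * I ^ 2) * ofReal_sqrt_three_sq + (3 * q / 4) * I_sq

theorem rho_pow_four_sq : (rho ^ 4) ^ 2 = rho ^ 2 := by
  rw [← pow_mul, show rho ^ (4 * 2) = rho ^ 6 * rho ^ 2 by ring, rho_pow_six, one_mul]

theorem equidivision_factor_rho_pow_four (q : ℝ) :
    (q : ℂ) * (rho ^ 4) ^ 2 + (1 - q) * rho ^ 4 =
      -(1 - ((Real.sqrt 3 * (2 * q - 1) : ℝ) : ℂ) * I) / 2 := by
  rw [rho_pow_four_sq, show rho ^ 4 = (rho ^ 2) ^ 2 by ring, rho_sq]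
  push_cast
  linear_combination ((1 - q) / 4 * I ^ 2) * ofReal_sqrt_three_sq + (3 * (1 - q) / 4) * I_sq

theorem exp_two_arctan_mul_I (t : ℝ) :
    exp (((2 * Real.arctan t : ℝ) : ℂ) * I) = (1 + t * I) / (1 - t * I) := by
  have hne : (1 + (t : ℂ) * I) / (1 - t * I) ≠ 0 :=
    div_ne_zero (fun h => by simpa using congrArg re h) (fun h => by simpa using congrArg re h)
  rw [← exp_log hne, Complex.ofReal_mul, Complex.ofReal_arctan, Complex.arctan]
  congr 1
  push_cast
  linear_combination (-log ((1 + t * I) / (1 - t * I))) * I_sq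

theorem stmt_19_general (q : ℝ) (A B C : ℂ)
    (A'' B'' C'' : ℂ)
    (hA : A'' = (q : ℂ) * B + (1 - (q : ℂ)) * C)
    (hB : B'' = (q : ℂ) * C + (1 - (q : ℂ)) * A)
    (hC : C'' = (q : ℂ) * A + (1 - (q : ℂ)) * B) :
    (A'' + rho ^ 2 * B'' + rho ^ 4 * C'') / (A'' + rho ^ 4 * B'' + rho ^ 2 * C'') =
      Complex.exp (((2 * Real.arctan (Real.sqrt 3 * (2 * q - 1)) : ℝ) : ℂ) * Complex.I) *
        ((A + rho ^ 2 * B + rho ^ 4 * C) / (A + rho ^ 4 * B + rho ^ 2 * C)) ∧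
    ‖(A'' + rho ^ 2 * B'' + rho ^ 4 * C'') / (A'' + rho ^ 4 * B'' + rho ^ 2 * C'')‖ =
      ‖(A + rho ^ 2 * B + rho ^ 4 * C) / (A + rho ^ 4 * B + rho ^ 2 * C)‖ := by
  set t : ℝ := Real.sqrt 3 * (2 * q - 1)
  have hnum : A'' + rho ^ 2 * B'' + rho ^ 4 * C'' =
      -(1 + t * I) / 2 * (A + rho ^ 2 * B + rho ^ 4 * C) := by
    have hω : (rho ^ 2) ^ 3 = 1 := by rw [← pow_mul]; exact rho_pow_six
    rw [hA, hB, hC, show rho ^ 4 = (rho ^ 2) ^ 2 by ring, equidivision_fourierCoeff hω,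
      equidivision_factor_rho_sq]
  have hden : A'' + rho ^ 4 * B'' + rho ^ 2 * C'' =
      -(1 - t * I) / 2 * (A + rho ^ 4 * B + rho ^ 2 * C) := by
    have hω : (rho ^ 4) ^ 3 = 1 := by
      rw [← pow_mul, show rho ^ (4 * 3) = (rho ^ 6) ^ 2 by ring, rho_pow_six, one_pow]
    rw [hA, hB, hC, ← rho_pow_four_sq, equidivision_fourierCoeff hω,
      equidivision_factor_rho_pow_four]
  have hrot : (A'' + rho ^ 2 * B'' + rho ^ 4 * C'') / (A'' + rho ^ 4 * B'' + rho ^ 2 * C'') =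
      exp (((2 * Real.arctan t : ℝ) : ℂ) * I) *
        ((A + rho ^ 2 * B + rho ^ 4 * C) / (A + rho ^ 4 * B + rho ^ 2 * C)) := by
    rw [hnum, hden, exp_two_arctan_mul_I, mul_div_mul_comm,
      div_div_div_cancel_right₀ two_ne_zero, neg_div_neg_eq]
  exact ⟨hrot, by rw [hrot, norm_mul, norm_exp_ofReal_mul_I, one_mul]⟩

/-- The q-equidivision operation rotates the shape invariant phi by 2 arctan(√3(2q-1)). -/
theorem stmt_19 (q : ℝ) (A B C : ℂ)
    (horient : 0 < ((C - A) / (B - A)).im)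
    (hden : A + rho ^ 4 * B + rho ^ 2 * C ≠ 0)
    (hphi : (A + rho ^ 2 * B + rho ^ 4 * C) / (A + rho ^ 4 * B + rho ^ 2 * C) ≠ 0)
    (A'' B'' C'' : ℂ)
    (hA : A'' = (q : ℂ) * B + (1 - (q : ℂ)) * C)
    (hB : B'' = (q : ℂ) * C + (1 - (q : ℂ)) * A)
    (hC : C'' = (q : ℂ) * A + (1 - (q : ℂ)) * B)
    (hden'' : A'' + rho ^ 4 * B'' + rho ^ 2 * C'' ≠ 0) :
    (A'' + rho ^ 2 * B'' + rho ^ 4 * C'') / (A'' + rho ^ 4 * B'' + rho ^ 2 * C'') =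
      Complex.exp (((2 * Real.arctan (Real.sqrt 3 * (2 * q - 1)) : ℝ) : ℂ) * Complex.I) *
        ((A + rho ^ 2 * B + rho ^ 4 * C) / (A + rho ^ 4 * B + rho ^ 2 * C)) ∧
    ‖(A'' + rho ^ 2 * B'' + rho ^ 4 * C'') / (A'' + rho ^ 4 * B'' + rho ^ 2 * C'')‖ =
      ‖(A + rho ^ 2 * B + rho ^ 4 * C) / (A + rho ^ 4 * B + rho ^ 2 * C)‖ :=
  stmt_19_general q A B C A'' B'' C'' hA hB hC
end
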